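/- Policy gradient theorem for directional derivatives: For policies π^{t+1}, π^t in a finite discounted MDP, the directional derivative of the performance V_ρ^π at π^t in the direction π^{t+1} − π^t equals E_{s ∼ d^{π^t}_ρ} [⟨Q_s^{π^t}, π_s^{t+1} − π_s^t⟩] up to the 1/(1−γ) factor; equivalently, V_ρ^{π^{t+1}} − V_ρ^{π^t} = (1/(1−γ)) E_{s∼d^{π^t}_ρ}[⟨Q_s^{π^t}, π_s^{t+1} − π_s^t⟩] + O(‖π^{t+1} − π^t‖²). -/

import Mathlib

/-!
Write `Δ = V' - V`, `δ = π' - π` and `P^π = policyKernel P π` for the state transition matrix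
of `π`. The two Bellman systems give `Δ = g + γ P^{π'} Δ` with `g s = ⟨Q s, δ s⟩`. Splitting
`P^{π'} = P^π + P^δ` and pairing with `d`, whose defining equation reads
`d = (1 - γ) ρ + γ d P^π`, gives the exact identity
`(1 - γ) ⟨ρ, Δ⟩ = ⟨d, g⟩ + γ ⟨d, P^δ Δ⟩`.
In sup norms, `g` and `P^δ` are `O(‖δ‖)`, and `P^{π'}` is stochastic, so `‖Δ‖ ≤ ‖g‖ / (1 - γ)`;
hence the remainder `⟨d, P^δ Δ⟩` is `O(‖δ‖²)`.
-/

open Finset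

def simplex (A : Type*) [Fintype A] : Set (A → ℝ) :=
  {p | (∀ a, 0 ≤ p a) ∧ ∑ a, p a = 1}

open Matrix

section

variable {ι κ : Type*} [Fintype ι] [Fintype κ]

theorem abs_dotProduct_le_sum_abs_mul_norm (v w : ι → ℝ) :
    |v ⬝ᵥ w| ≤ (∑ i, |v i|) * ‖w‖ :=
  calc |v ⬝ᵥ w| ≤ ∑ i, |v i * w i| := abs_sum_le_sum_abs _ _
    _ ≤ ∑ i, |v i| * ‖w‖ := sum_le_sum fun i _ => by
        rw [abs_mul, ← Real.norm_eq_abs (w i)]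
        exact mul_le_mul_of_nonneg_left (norm_le_pi_norm w i) (abs_nonneg _)
    _ = (∑ i, |v i|) * ‖w‖ := (sum_mul _ _ _).symm

theorem norm_mulVec_le_of_sum_abs_le (M : Matrix ι κ ℝ) {c : ℝ} (hc0 : 0 ≤ c)
    (hc : ∀ i, ∑ j, |M i j| ≤ c) (v : κ → ℝ) : ‖M *ᵥ v‖ ≤ c * ‖v‖ :=
  (pi_norm_le_iff_of_nonneg (by positivity)).2 fun i => by
    rw [Real.norm_eq_abs]
    exact (abs_dotProduct_le_sum_abs_mul_norm (M i) v).trans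
      (mul_le_mul_of_nonneg_right (hc i) (norm_nonneg v))

theorem norm_le_div_of_eq_add_smul_mulVec {K : Matrix ι ι ℝ} (hK : ∀ i, ∑ j, |K i j| ≤ 1)
    {γ : ℝ} (hγ0 : 0 ≤ γ) (hγ1 : γ < 1) {x g : ι → ℝ} (hx : x = g + γ • (K *ᵥ x)) :
    ‖x‖ ≤ ‖g‖ / (1 - γ) := by
  have hKx : ‖K *ᵥ x‖ ≤ ‖x‖ := by
    simpa using norm_mulVec_le_of_sum_abs_le K zero_le_one hK x
  have hx_le : ‖x‖ ≤ ‖g‖ + γ * ‖x‖ :=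
    calc ‖x‖ = ‖g + γ • (K *ᵥ x)‖ := congrArg norm hx
      _ ≤ ‖g‖ + ‖γ • (K *ᵥ x)‖ := norm_add_le _ _
      _ ≤ ‖g‖ + γ * ‖x‖ := by
        rw [norm_smul, Real.norm_of_nonneg hγ0]
        gcongr
  rw [le_div_iff₀ (by linarith)]
  linarith

theorem one_sub_mul_dotProduct_eq {K E : Matrix ι ι ℝ} {γ : ℝ} {x g d ρ : ι → ℝ}
    (hx : x = g + γ • ((K + E) *ᵥ x)) (hd : d = (1 - γ) • ρ + γ • (d ᵥ* K)) :
    (1 - γ) * (ρ ⬝ᵥ x) = d ⬝ᵥ g + γ * (d ⬝ᵥ (E *ᵥ x)) := by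
  have hdx : d ⬝ᵥ x = d ⬝ᵥ g + γ * ((d ᵥ* K) ⬝ᵥ x) + γ * (d ⬝ᵥ (E *ᵥ x)) := by
    conv_lhs => rw [hx]
    rw [add_mulVec, dotProduct_add, dotProduct_smul, dotProduct_add, dotProduct_mulVec,
      smul_eq_mul]
    ring
  have hdx' : d ⬝ᵥ x = (1 - γ) * (ρ ⬝ᵥ x) + γ * ((d ᵥ* K) ⬝ᵥ x) := by
    conv_lhs => rw [hd]
    rw [add_dotProduct, smul_dotProduct, smul_dotProduct, smul_eq_mul, smul_eq_mul]
  linarith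

end

section MDP

variable {S A : Type*} [Fintype A]

def policyKernel (P : S → A → S → ℝ) (π : S → A → ℝ) : Matrix S S ℝ :=
  fun s s' => ∑ a, π s a * P s a s'

theorem policyKernel_sub (P : S → A → S → ℝ) (π π' : S → A → ℝ) :
    policyKernel P (π' - π) = policyKernel P π' - policyKernel P π := by
  ext s s'
  simp only [policyKernel, Pi.sub_apply, Matrix.sub_apply, sub_mul, sum_sub_distrib]

variable [Fintype S]

theorem vecMul_policyKernel (P : S → A → S → ℝ) (π : S → A → ℝ) (d : S → ℝ) (s' : S) :
    (d ᵥ* policyKernel P π) s' = ∑ s, ∑ a, d s * π s a * P s a s' := by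
  simp only [vecMul, dotProduct, policyKernel, mul_sum, mul_assoc]

theorem sum_abs_policyKernel_le {P : S → A → S → ℝ} (hP0 : ∀ s a s', 0 ≤ P s a s')
    (hP1 : ∀ s a, ∑ s', P s a s' = 1) (π : S → A → ℝ) (s : S) :
    ∑ s', |policyKernel P π s s'| ≤ ∑ a, |π s a| :=
  calc ∑ s', |∑ a, π s a * P s a s'| ≤ ∑ s', ∑ a, |π s a| * P s a s' :=
        sum_le_sum fun s' _ => (abs_sum_le_sum_abs _ _).trans_eq <|
          sum_congr rfl fun a _ => by rw [abs_mul, abs_of_nonneg (hP0 s a s')]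
    _ = ∑ a, |π s a| := by
        rw [sum_comm]
        simp only [← mul_sum, hP1, mul_one]

theorem norm_policyKernel_mulVec_le {P : S → A → S → ℝ} (hP0 : ∀ s a s', 0 ≤ P s a s')
    (hP1 : ∀ s a, ∑ s', P s a s' = 1) (δ : S → A → ℝ) (x : S → ℝ) :
    ‖policyKernel P δ *ᵥ x‖ ≤ Fintype.card A * ‖δ‖ * ‖x‖ := by
  refine norm_mulVec_le_of_sum_abs_le _ (by positivity) (fun s => ?_) x
  refine (sum_abs_policyKernel_le hP0 hP1 δ s).trans ?_
  simpa using sum_le_card_nsmul univ (fun a => |δ s a|) ‖δ‖ fun a _ =>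
    (norm_le_pi_norm (δ s) a).trans (norm_le_pi_norm δ s)

theorem norm_dotProduct_apply_le (Q δ : S → A → ℝ) :
    ‖fun s => Q s ⬝ᵥ δ s‖ ≤ (∑ s, ∑ a, |Q s a|) * ‖δ‖ :=
  (pi_norm_le_iff_of_nonneg (by positivity)).2 fun s => by
    rw [Real.norm_eq_abs]
    refine (abs_dotProduct_le_sum_abs_mul_norm (Q s) (δ s)).trans ?_
    gcongr
    · exact single_le_sum (f := fun s => ∑ a, |Q s a|)
        (fun s _ => sum_nonneg fun a _ => abs_nonneg _) (mem_univ s)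
    · exact norm_le_pi_norm δ s

variable {γ : ℝ} {r : S → A → ℝ} {P : S → A → S → ℝ} {π π' Q Q' : S → A → ℝ} {V V' : S → ℝ}

theorem value_sub_eq (hV : ∀ s, V s = ∑ a, π s a * Q s a)
    (hQ : ∀ s a, Q s a = r s a + γ * ∑ s', P s a s' * V s')
    (hV' : ∀ s, V' s = ∑ a, π' s a * Q' s a)
    (hQ' : ∀ s a, Q' s a = r s a + γ * ∑ s', P s a s' * V' s') :
    V' - V = (fun s => Q s ⬝ᵥ (π' - π) s) + γ • (policyKernel P π' *ᵥ (V' - V)) := by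
  funext s
  have hQ_sub : ∀ a, Q' s a - Q s a = γ * ∑ s', P s a s' * (V' s' - V s') := fun a => by
    simp only [hQ, hQ', mul_sub, sum_sub_distrib]
    ring
  calc V' s - V s = ∑ a, Q s a * (π' s a - π s a) + ∑ a, π' s a * (Q' s a - Q s a) := by
        rw [hV, hV', ← sum_sub_distrib, ← sum_add_distrib]
        exact sum_congr rfl fun a _ => by ring
    _ = _ := by
        simp only [hQ_sub, Pi.add_apply, Pi.smul_apply, Pi.sub_apply, smul_eq_mul, mulVec,
          dotProduct, policyKernel, mul_sum, sum_mul]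
        rw [sum_comm (s := univ) (t := univ) (f := fun a s' => π' s a * _)]
        exact congrArg _ (sum_congr rfl fun s' _ => sum_congr rfl fun a _ => by ring)

theorem visitation_eq_smul_add_vecMul {ρ d : S → ℝ}
    (hd : ∀ s', d s' = (1 - γ) * ρ s' + γ * ∑ s, ∑ a, d s * π s a * P s a s') :
    d = (1 - γ) • ρ + γ • (d ᵥ* policyKernel P π) := by
  funext s'
  rw [Pi.add_apply, Pi.smul_apply, Pi.smul_apply, vecMul_policyKernel, smul_eq_mul, smul_eq_mul]
  exact hd s'

theorem performance_difference {ρ d : S → ℝ} (hV : ∀ s, V s = ∑ a, π s a * Q s a)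
    (hQ : ∀ s a, Q s a = r s a + γ * ∑ s', P s a s' * V s')
    (hV' : ∀ s, V' s = ∑ a, π' s a * Q' s a)
    (hQ' : ∀ s a, Q' s a = r s a + γ * ∑ s', P s a s' * V' s')
    (hd : ∀ s', d s' = (1 - γ) * ρ s' + γ * ∑ s, ∑ a, d s * π s a * P s a s') :
    (1 - γ) * (ρ ⬝ᵥ (V' - V)) = d ⬝ᵥ (fun s => Q s ⬝ᵥ (π' - π) s) +
      γ * (d ⬝ᵥ (policyKernel P (π' - π) *ᵥ (V' - V))) := by
  refine one_sub_mul_dotProduct_eq ?_ (visitation_eq_smul_add_vecMul hd)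
  rw [policyKernel_sub, add_sub_cancel]
  exact value_sub_eq hV hQ hV' hQ'

theorem norm_value_sub_le (hγ0 : 0 ≤ γ) (hγ1 : γ < 1) (hP0 : ∀ s a s', 0 ≤ P s a s')
    (hP1 : ∀ s a, ∑ s', P s a s' = 1) (hπ' : ∀ s, π' s ∈ simplex A)
    (hV : ∀ s, V s = ∑ a, π s a * Q s a)
    (hQ : ∀ s a, Q s a = r s a + γ * ∑ s', P s a s' * V s')
    (hV' : ∀ s, V' s = ∑ a, π' s a * Q' s a)
    (hQ' : ∀ s a, Q' s a = r s a + γ * ∑ s', P s a s' * V' s') :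
    ‖V' - V‖ ≤ (∑ s, ∑ a, |Q s a|) * ‖π' - π‖ / (1 - γ) := by
  have hK : ∀ s, ∑ s', |policyKernel P π' s s'| ≤ 1 := fun s => by
    simpa [abs_of_nonneg ((hπ' s).1 _), (hπ' s).2] using sum_abs_policyKernel_le hP0 hP1 π' s
  refine (norm_le_div_of_eq_add_smul_mulVec hK hγ0 hγ1 (value_sub_eq hV hQ hV' hQ')).trans ?_
  gcongr
  exact norm_dotProduct_apply_le Q (π' - π)

end MDP

theorem policy_gradient_directional_derivative_general
    {S A : Type*} [Fintype S] [Fintype A]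
    (γ : ℝ) (hγ0 : 0 ≤ γ) (hγ1 : γ < 1)
    (r : S → A → ℝ) (P : S → A → S → ℝ)
    (hP0 : ∀ s a s', 0 ≤ P s a s') (hP1 : ∀ s a, ∑ s', P s a s' = 1)
    (ρ : S → ℝ)
    (π : S → A → ℝ)
    (Q : S → A → ℝ) (V : S → ℝ)
    (hV : ∀ s, V s = ∑ a, π s a * Q s a)
    (hQ : ∀ s a, Q s a = r s a + γ * ∑ s', P s a s' * V s')
    (d : S → ℝ)
    (hd : ∀ s', d s' = (1 - γ) * ρ s' + γ * ∑ s, ∑ a, d s * π s a * P s a s') :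
    ∃ C : ℝ, 0 ≤ C ∧
      ∀ (π' : S → A → ℝ), (∀ s, π' s ∈ simplex A) →
      ∀ (Q' : S → A → ℝ) (V' : S → ℝ),
        (∀ s, V' s = ∑ a, π' s a * Q' s a) →
        (∀ s a, Q' s a = r s a + γ * ∑ s', P s a s' * V' s') →
        |((∑ s, ρ s * V' s) - (∑ s, ρ s * V s)) -
          (1 / (1 - γ)) * ∑ s, d s * (∑ a, Q s a * (π' s a - π s a))|
          ≤ C * ‖π' - π‖ ^ 2 := by
  have h1γ : 0 < 1 - γ := by linarith
  refine ⟨γ * (∑ s, |d s|) * Fintype.card A * (∑ s, ∑ a, |Q s a|) / (1 - γ) ^ 2,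
    by positivity, fun π' hπ' Q' V' hV' hQ' => ?_⟩
  set err := d ⬝ᵥ (policyKernel P (π' - π) *ᵥ (V' - V))
  have hperf := performance_difference hV hQ hV' hQ' hd
  have hlhs : (∑ s, ρ s * V' s - ∑ s, ρ s * V s) -
      1 / (1 - γ) * ∑ s, d s * ∑ a, Q s a * (π' s a - π s a) = γ / (1 - γ) * err := by
    have hρ : ρ ⬝ᵥ (V' - V) = ∑ s, ρ s * V' s - ∑ s, ρ s * V s := dotProduct_sub ρ V' V
    have hg : d ⬝ᵥ (fun s => Q s ⬝ᵥ (π' - π) s) =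
        ∑ s, d s * ∑ a, Q s a * (π' s a - π s a) := rfl
    rw [hρ, hg] at hperf
    field_simp
    linear_combination hperf
  have herr : |err| ≤ (∑ s, |d s|) * (Fintype.card A * ‖π' - π‖ * ‖V' - V‖) :=
    (abs_dotProduct_le_sum_abs_mul_norm _ _).trans <|
      mul_le_mul_of_nonneg_left (norm_policyKernel_mulVec_le hP0 hP1 _ _) (by positivity)
  have hV_le := norm_value_sub_le hγ0 hγ1 hP0 hP1 hπ' hV hQ hV' hQ'
  rw [hlhs, abs_mul, abs_of_nonneg (div_nonneg hγ0 h1γ.le)]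
  calc γ / (1 - γ) * |err|
      ≤ γ / (1 - γ) * ((∑ s, |d s|) * (Fintype.card A * ‖π' - π‖ *
          ((∑ s, ∑ a, |Q s a|) * ‖π' - π‖ / (1 - γ)))) := by
        gcongr
        exact herr.trans (by gcongr)
    _ = _ := by field_simp

/-- **Policy gradient theorem for directional derivatives.** For a finite discounted
MDP and a fixed policy `π` with action-values `Q` and discounted visitation
distribution `d`, there is a constant `C` such that for every policy `π'`,
`V_ρ^{π'} − V_ρ^{π} = (1/(1−γ)) E_{s∼d^π_ρ}[⟨Q_s^π, π'_s − π_s⟩] + O(‖π' − π‖²)`,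
i.e. the difference deviates from the linear term by at most `C ‖π' − π‖²`. -/
theorem policy_gradient_directional_derivative
    {S A : Type*} [Fintype S] [Fintype A]
    (γ : ℝ) (hγ0 : 0 ≤ γ) (hγ1 : γ < 1)
    (r : S → A → ℝ) (P : S → A → S → ℝ)
    (hP0 : ∀ s a s', 0 ≤ P s a s') (hP1 : ∀ s a, ∑ s', P s a s' = 1)
    (ρ : S → ℝ) (hρ0 : ∀ s, 0 ≤ ρ s) (hρ1 : ∑ s, ρ s = 1)
    (π : S → A → ℝ) (hπ : ∀ s, π s ∈ simplex A)
    (Q : S → A → ℝ) (V : S → ℝ)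
    (hV : ∀ s, V s = ∑ a, π s a * Q s a)
    (hQ : ∀ s a, Q s a = r s a + γ * ∑ s', P s a s' * V s')
    (d : S → ℝ)
    (hd : ∀ s', d s' = (1 - γ) * ρ s' + γ * ∑ s, ∑ a, d s * π s a * P s a s') :
    ∃ C : ℝ, 0 ≤ C ∧
      ∀ (π' : S → A → ℝ), (∀ s, π' s ∈ simplex A) →
      ∀ (Q' : S → A → ℝ) (V' : S → ℝ),
        (∀ s, V' s = ∑ a, π' s a * Q' s a) →
        (∀ s a, Q' s a = r s a + γ * ∑ s', P s a s' * V' s') →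
        |((∑ s, ρ s * V' s) - (∑ s, ρ s * V s)) -
          (1 / (1 - γ)) * ∑ s, d s * (∑ a, Q s a * (π' s a - π s a))|
          ≤ C * ‖π' - π‖ ^ 2 :=
  policy_gradient_directional_derivative_general γ hγ0 hγ1 r P hP0 hP1 ρ π Q V hV hQ d hd
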